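/- Let f = (f_o, f_a) : P → Q be a Chu transform between Chu spaces with f_a : Q_a → P_a surjective, and let ρ, ρ' : P_a → Q_a be two sections of f_a. Then the induced simplicial maps N(ρ), N(ρ') : N(P) → N(Q) are contiguous: for every simplex σ of N(P), the set ρ(σ) ∪ ρ'(σ) is a simplex of N(Q). -/
import Mathlib

/-- Two sections ρ, ρ' of f_a induce contiguous simplicial maps on Čech
nerves: for every simplex σ of N(P), ρ(σ) ∪ ρ'(σ) is a simplex of N(Q). -/
theorem chu_transform_sections_contiguous
    (Po Pa Qo Qa : Type*) [DecidableEq Qa]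
    (satP : Po → Pa → Prop) (satQ : Qo → Qa → Prop)
    (fo : Po → Qo) (fa : Qa → Pa)
    (adj : ∀ (x : Po) (y : Qa), satQ (fo x) y ↔ satP x (fa y))
    (hsurj : Function.Surjective fa)
    (ρ ρ' : Pa → Qa) (hρ : ∀ p : Pa, fa (ρ p) = p)
    (hρ' : ∀ p : Pa, fa (ρ' p) = p)
    (σ : Finset Pa) (hσ : σ.Nonempty)
    (hsimp : ∃ x : Po, ∀ p ∈ σ, satP x p) :
    ∃ y : Qo, ∀ q ∈ σ.image ρ ∪ σ.image ρ', satQ y q := by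
  obtain ⟨x, hx⟩ := hsimp
  refine ⟨fo x, fun q hq => ?_⟩
  rcases Finset.mem_union.mp hq with h | h <;>
    obtain ⟨p, hp, rfl⟩ := Finset.mem_image.mp h <;>
    rw [adj] <;> simp [hρ, hρ', hx p hp]
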